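/- arXiv:2301.07404 — 2 statements merged into one kernel-verified Lean document; each statement's English description precedes it below -/
import Mathlib

section
/- There exists an ∞-ample simplicial complex whose vertex set is countably infinite; namely, the complex X = ⋃_{n≥0} X_n, where X_0 is a single vertex and X_{n+1} is obtained from X_n by attaching, for every subcomplex A ⊆ X_n (including A = ∅), a cone v(A) ∗ A with a new apex vertex v(A) and base A, is ∞-ample. -/
/-- An abstract simplicial complex on vertex type `V`: a collection of nonempty
finite subsets (simplexes) closed under passing to nonempty subsets.  The vertex
set is the set of `v` with `{v}` a simplex. -/
structure SComplex (V : Type*) where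
  faces : Set (Finset V)
  nonempty_of_mem : ∀ ⦃σ : Finset V⦄, σ ∈ faces → σ.Nonempty
  down_closed : ∀ ⦃σ : Finset V⦄, σ ∈ faces → ∀ ⦃τ : Finset V⦄, τ ⊆ σ → τ.Nonempty → τ ∈ faces

namespace SComplex

variable {V W : Type*}

/-- The vertex set of a simplicial complex. -/
def verts (X : SComplex V) : Set V := {v | {v} ∈ X.faces}

/-- The set of faces of the induced subcomplex `X_U`. -/
def induced (X : SComplex V) (U : Set V) : Set (Finset V) :=
  {σ | σ ∈ X.faces ∧ (σ : Set V) ⊆ U}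

/-- The induced subcomplex `X_U`, as a simplicial complex. -/
def inducedSub (X : SComplex V) (U : Set V) : SComplex V where
  faces := X.induced U
  nonempty_of_mem := fun _ h => X.nonempty_of_mem h.1
  down_closed := fun _ h _ hτ hne =>
    ⟨X.down_closed h.1 hτ hne, Set.Subset.trans (Finset.coe_subset.mpr hτ) h.2⟩

/-- The link of a vertex `v`: simplexes `σ` with `v ∉ σ` and `σ ∪ {v} ∈ X`. -/
def link [DecidableEq V] (X : SComplex V) (v : V) : Set (Finset V) :=
  {σ | σ ∈ X.faces ∧ v ∉ σ ∧ insert v σ ∈ X.faces}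

/-- The link of a simplex `σ`: simplexes `τ` with `τ ∩ σ = ∅` and `τ ∪ σ ∈ X`. -/
def linkSimplex [DecidableEq V] (X : SComplex V) (σ : Finset V) : SComplex V where
  faces := {τ | τ ∈ X.faces ∧ Disjoint τ σ ∧ τ ∪ σ ∈ X.faces}
  nonempty_of_mem := fun _ h => X.nonempty_of_mem h.1
  down_closed := by
    intro τ hτ ρ hρ hne
    refine ⟨X.down_closed hτ.1 hρ hne, Finset.disjoint_of_subset_left hρ hτ.2.1, ?_⟩
    exact X.down_closed hτ.2.2 (Finset.union_subset_union_left hρ)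
      (hne.mono Finset.subset_union_left)

/-- A downward closed family of finite sets (a subcomplex, when contained in a complex). -/
def DownClosed (A : Set (Finset V)) : Prop :=
  ∀ ⦃σ : Finset V⦄, σ ∈ A → ∀ ⦃τ : Finset V⦄, τ ⊆ σ → τ.Nonempty → τ ∈ A

/-- `X` is `r`-ample: `X` is nonempty and for every `U ⊆ V(X)` with `|U| ≤ r` and every
subcomplex `A ⊆ X_U` there is a vertex `v ∈ V(X) \ U` with `Lk_X(v) ∩ X_U = A`. -/
def Ample [DecidableEq V] (X : SComplex V) (r : ℕ) : Prop :=
  X.faces.Nonempty ∧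
  ∀ U : Finset V, (U : Set V) ⊆ X.verts → U.card ≤ r →
    ∀ A : Set (Finset V), A ⊆ X.induced (U : Set V) → DownClosed A →
      ∃ v ∈ X.verts, v ∉ U ∧ X.link v ∩ X.induced (U : Set V) = A

/-- An embedding of `A` into `X`: an isomorphism of `A` onto an induced subcomplex of `X`,
recorded as a vertex map injective on `V(A)` such that a set of vertexes of `A` is a
simplex of `A` iff its image is a simplex of `X`. -/
def IsEmbedding [DecidableEq V] (f : W → V) (A : SComplex W) (X : SComplex V) : Prop :=
  Set.InjOn f A.verts ∧
  ∀ σ : Finset W, (σ : Set W) ⊆ A.verts → (σ ∈ A.faces ↔ σ.image f ∈ X.faces)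

/-- An isomorphism of `A` onto `X`: a bijection of vertex sets carrying simplexes to
simplexes in both directions. -/
def IsIso [DecidableEq V] (f : W → V) (A : SComplex W) (X : SComplex V) : Prop :=
  Set.BijOn f A.verts X.verts ∧
  ∀ σ : Finset W, (σ : Set W) ⊆ A.verts → (σ ∈ A.faces ↔ σ.image f ∈ X.faces)

/-- The complex obtained from `X` by removing a set `𝓕` of simplexes: all faces of `X`
containing no member of `𝓕` as a subset. -/
def remove (X : SComplex V) (𝓕 : Set (Finset V)) : SComplex V where
  faces := {σ | σ ∈ X.faces ∧ ∀ τ ∈ 𝓕, ¬ τ ⊆ σ}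
  nonempty_of_mem := fun _ h => X.nonempty_of_mem h.1
  down_closed := fun _ hσ _ hρ hne =>
    ⟨X.down_closed hσ.1 hρ hne, fun τ hτ hsub => hσ.2 τ hτ (hsub.trans hρ)⟩

/-- `M'(r)`: the number of simplicial complexes (including the empty complex) with vertex
set contained in a fixed `r`-element set. -/
noncomputable def Mprime (r : ℕ) : ℕ :=
  Nat.card {A : Set (Finset (Fin r)) // (∀ σ ∈ A, σ.Nonempty) ∧ DownClosed A}

/-- The 1-skeleton of a complex, as a simple graph on the ambient vertex type. -/
def skeletonGraph [DecidableEq V] (Y : SComplex V) : SimpleGraph V where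
  Adj u v := u ≠ v ∧ ({u, v} : Finset V) ∈ Y.faces
  symm := ⟨fun u v h => ⟨h.1.symm, by rw [Finset.pair_comm]; exact h.2⟩⟩
  loopless := ⟨fun v h => h.1 rfl⟩

/-- The vertexes spanned by a family of simplexes. -/
def vertsOf (L : Set (Finset V)) : Set V := ⋃ σ ∈ L, (σ : Set V)

/-- `X` is `r`-conic: `X` is nonempty and every subcomplex `L ⊆ X` with at most `r`
vertexes is contained in the closed star of some vertex of `X`. -/
def Conic [DecidableEq V] (X : SComplex V) (r : ℕ) : Prop :=
  X.faces.Nonempty ∧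
  ∀ L : Set (Finset V), L ⊆ X.faces → DownClosed L →
    (vertsOf L).Finite → (vertsOf L).ncard ≤ r →
      ∃ v ∈ X.verts, ∀ σ ∈ L, insert v σ ∈ X.faces

/-- The intersection `⋂ᵢ St_K(vᵢ)` of the closed stars of the vertexes `v i`,
as a simplicial complex. -/
def starsInter [DecidableEq V] (K : SComplex V) {t : ℕ} (v : Fin t → V) : SComplex V where
  faces := {σ | σ ∈ K.faces ∧ ∀ i, insert (v i) σ ∈ K.faces}
  nonempty_of_mem := fun _ h => K.nonempty_of_mem h.1
  down_closed := fun _ hσ _ hρ hne =>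
    ⟨K.down_closed hσ.1 hρ hne, fun i =>
      K.down_closed (hσ.2 i) (Finset.insert_subset_insert _ hρ)
        ⟨v i, Finset.mem_insert_self _ _⟩⟩

end SComplex

/-- The set `Q_{n,p} = {gᵃ : a ≡ β² mod p for some integer β}` in a finite field. -/
def paleyQ {F : Type*} [Field F] (p : ℕ) (g : Fˣ) : Set F :=
  {x | ∃ α : ℤ, (∃ β : ℤ, (p : ℤ) ∣ α - β ^ 2) ∧ x = ((g ^ α : Fˣ) : F)}

/-- The product `∏_{i<j} (e i - e j)` over all pairs from an enumeration `e`. -/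
def pairProd {F : Type*} [Field F] {k : ℕ} (e : Fin k → F) : F :=
  ∏ q ∈ Finset.univ.filter (fun q : Fin k × Fin k => q.1 < q.2), (e q.1 - e q.2)

/-- The Iterated Paley simplicial complex `X_{n,p}`: vertex set `F = 𝔽_n`, and a nonempty
finite set is a simplex iff for every subset with at least two elements, the product of
the pairwise differences (in any enumeration) lies in `Q_{n,p}`. -/
def paleyComplex (F : Type*) [Field F] [DecidableEq F] (p : ℕ) (g : Fˣ) : SComplex F where
  faces := {σ | σ.Nonempty ∧ ∀ τ ⊆ σ, 2 ≤ τ.card →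
    ∀ e : Fin τ.card → F, Function.Injective e → Finset.image e Finset.univ = τ →
      pairProd e ∈ paleyQ p g}
  nonempty_of_mem := fun _ h => h.1
  down_closed := fun _ hσ _ hτ hne => ⟨hne, fun ρ hρ => hσ.2 ρ (hρ.trans hτ)⟩

/-! The complex is built in stages, every stage attaching a new cone over every subcomplex
of the previous one. Given `U` and a subcomplex `A` of `X_U`, let `n` be the last stage at which
a vertex of `U` is born, and let `v` be an apex attached at stage `n + 1` over `A`. A simplex
through `v` and vertexes of `U` can only come from the cone of `v`, since any other apex in it
would be born after `v`; hence `Lk(v) ∩ X_U = A`. -/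

namespace SComplex

variable {V : Type*}

theorem DownClosed.union {A B : Set (Finset V)} (hA : DownClosed A) (hB : DownClosed B) :
    DownClosed (A ∪ B) := by
  rintro σ (hσ | hσ) τ hτ hne
  · exact Or.inl (hA hσ hτ hne)
  · exact Or.inr (hB hσ hτ hne)

theorem DownClosed.iUnion {ι : Sort*} {A : ι → Set (Finset V)} (hA : ∀ i, DownClosed (A i)) :
    DownClosed (⋃ i, A i) := by
  intro σ hσ τ hτ hne
  obtain ⟨i, hi⟩ := Set.mem_iUnion.mp hσ
  exact Set.mem_iUnion.mpr ⟨i, hA i hi hτ hne⟩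

theorem downClosed_singleton_singleton (v : V) : DownClosed {{v}} := by
  rintro _ rfl τ hτ hne
  exact (Finset.Nonempty.subset_singleton_iff hne).mp hτ

/-- The largest subcomplex of `F` inside `B`. -/
def facesWithin (F B : Set (Finset V)) : Set (Finset V) :=
  {σ | σ ∈ F ∧ ∀ τ ⊆ σ, τ.Nonempty → τ ∈ B}

theorem DownClosed.facesWithin {F : Set (Finset V)} (hF : DownClosed F) (B : Set (Finset V)) :
    DownClosed (facesWithin F B) :=
  fun _ hσ _ hτ hne => ⟨hF hσ.1 hτ hne, fun ρ hρ => hσ.2 ρ (hρ.trans hτ)⟩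

variable [DecidableEq V]

def cone (v : V) (A : Set (Finset V)) : Set (Finset V) :=
  A ∪ insert {v} (insert v '' A)

theorem DownClosed.cone {A : Set (Finset V)} (hA : DownClosed A) (v : V) :
    DownClosed (cone v A) := by
  rintro _ (hσ | rfl | ⟨σ, hσ, rfl⟩) τ hτ hne
  · exact Or.inl (hA hσ hτ hne)
  · exact Or.inr (Or.inl ((Finset.Nonempty.subset_singleton_iff hne).mp hτ))
  · by_cases hv : v ∈ τ
    · rcases (τ.erase v).eq_empty_or_nonempty with h | h
      · refine Or.inr (Or.inl ?_)
        simpa [hne.ne_empty] using (Finset.erase_eq_empty_iff τ v).mp h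
      · exact Or.inr (Or.inr ⟨τ.erase v, hA hσ (Finset.subset_insert_iff.mp hτ) h,
          Finset.insert_erase hv⟩)
    · exact Or.inl (hA hσ ((Finset.subset_insert_iff_of_notMem hv).mp hτ) hne)

end SComplex

namespace RadoComplex

open SComplex

/-- Vertex `c + 1` is born at stage `(code c).1 + 1` as the apex of a cone over the largest
subcomplex of stage `(code c).1` inside `(code c).2`; vertex `0` forms stage `0`. As `code` is
onto, every subcomplex of every stage gets a cone. -/
noncomputable def code (c : ℕ) : ℕ × Finset (Finset ℕ) := Denumerable.ofNat _ c

/-- The stage at which a vertex is born. -/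
noncomputable def rank : ℕ → ℕ
  | 0 => 0
  | c + 1 => (code c).1 + 1

noncomputable def stage : ℕ → Set (Finset ℕ)
  | 0 => {{0}}
  | n + 1 => stage n ∪
      ⋃ (c : ℕ) (_ : (code c).1 = n), cone (c + 1) (facesWithin (stage n) (code c).2)

theorem mem_stage_succ {n : ℕ} {σ : Finset ℕ} :
    σ ∈ stage (n + 1) ↔ σ ∈ stage n ∨ ∃ c, (code c).1 = n ∧
      (σ = {c + 1} ∨ ∃ τ ∈ facesWithin (stage n) (code c).2, insert (c + 1) τ = σ) := by
  simp only [stage, cone, Set.mem_union, Set.mem_iUnion, Set.mem_insert_iff, Set.mem_image,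
    exists_prop]
  constructor
  · rintro (h | ⟨c, hc, (h | h)⟩)
    · exact Or.inl h
    · exact Or.inl h.1
    · exact Or.inr ⟨c, hc, h⟩
  · rintro (h | ⟨c, hc, h⟩)
    · exact Or.inl h
    · exact Or.inr ⟨c, hc, Or.inr h⟩

theorem rank_succ (c : ℕ) : rank (c + 1) = (code c).1 + 1 := rfl

theorem stage_mono : Monotone stage :=
  monotone_nat_of_le_succ fun _ => Set.subset_union_left

theorem downClosed_stage (n : ℕ) : DownClosed (stage n) := by
  induction n with
  | zero => exact downClosed_singleton_singleton 0
  | succ n ih =>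
    exact ih.union (DownClosed.iUnion fun c => DownClosed.iUnion fun _ =>
      (ih.facesWithin _).cone _)

theorem nonempty_of_mem_stage {n : ℕ} {σ : Finset ℕ} (h : σ ∈ stage n) : σ.Nonempty := by
  induction n generalizing σ with
  | zero => exact h ▸ Finset.singleton_nonempty 0
  | succ n ih =>
    rcases mem_stage_succ.mp h with h | ⟨c, -, rfl | ⟨τ, -, rfl⟩⟩
    · exact ih h
    · exact Finset.singleton_nonempty _
    · exact Finset.insert_nonempty _ _

theorem rank_le_of_mem_stage {m w : ℕ} {σ : Finset ℕ} (h : σ ∈ stage m) (hw : w ∈ σ) :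
    rank w ≤ m := by
  induction m generalizing σ with
  | zero =>
    rw [show σ = {0} from h, Finset.mem_singleton] at hw
    simp [hw, rank]
  | succ m ih =>
    rcases mem_stage_succ.mp h with h | ⟨c, hc, rfl | ⟨τ, hτ, rfl⟩⟩
    · exact (ih h hw).trans m.le_succ
    · rw [Finset.mem_singleton.mp hw, rank_succ, hc]
    · rcases Finset.mem_insert.mp hw with rfl | hw
      · rw [rank_succ, hc]
      · exact (ih hτ.1 hw).trans m.le_succ

theorem mem_stage_of_rank_le {m n : ℕ} {σ : Finset ℕ} (h : σ ∈ stage m)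
    (hrank : ∀ w ∈ σ, rank w ≤ n) : σ ∈ stage n := by
  induction m generalizing σ with
  | zero => exact stage_mono n.zero_le h
  | succ m ih =>
    rcases mem_stage_succ.mp h with h' | ⟨c, hc, hσ⟩
    · exact ih h' hrank
    · have hcσ : c + 1 ∈ σ := by
        rcases hσ with rfl | ⟨τ, -, rfl⟩
        · exact Finset.mem_singleton_self _
        · exact Finset.mem_insert_self _ _
      have hmn : m + 1 ≤ n := by simpa only [rank_succ, hc] using hrank _ hcσ
      exact stage_mono hmn h

theorem mem_facesWithin_of_insert_mem_stage {c m : ℕ} {σ : Finset ℕ} (hne : σ.Nonempty)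
    (hrank : ∀ w ∈ σ, rank w ≤ (code c).1) (h : insert (c + 1) σ ∈ stage m) :
    σ ∈ facesWithin (stage (code c).1) (code c).2 := by
  have hcσ : c + 1 ∉ σ := fun hc => by simpa [rank_succ] using hrank _ hc
  induction m with
  | zero =>
    have := Finset.mem_singleton.mp ((show insert (c + 1) σ = {0} from h) ▸
      Finset.mem_insert_self (c + 1) σ)
    omega
  | succ m ih =>
    rcases mem_stage_succ.mp h with h | ⟨d, hd, hσ | ⟨τ, hτ, hστ⟩⟩
    · exact ih h
    · obtain ⟨x, hx⟩ := hne
      have hx' := Finset.mem_singleton.mp (hσ ▸ Finset.mem_insert_of_mem hx)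
      have hc' := Finset.mem_singleton.mp (hσ ▸ Finset.mem_insert_self (c + 1) σ)
      exact absurd (hx'.trans hc'.symm ▸ hx) hcσ
    · obtain rfl | hdc := eq_or_ne c d
      · have hcτ : c + 1 ∉ τ := fun hc => by
          simpa [rank_succ, hd] using rank_le_of_mem_stage hτ.1 hc
        have hτσ : τ = σ := by
          rw [← Finset.erase_insert hcτ, hστ, Finset.erase_insert hcσ]
        exact hτσ ▸ hd ▸ hτ
      · -- then `d + 1 ∈ σ` and `c + 1 ∈ τ`: each apex would be born before the other
        have hdσ : d + 1 ∈ σ := by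
          have := hστ ▸ Finset.mem_insert_self (d + 1) τ
          exact (Finset.mem_insert.mp this).resolve_left (by omega)
        have hcτ : c + 1 ∈ τ := by
          have := hστ.symm ▸ Finset.mem_insert_self (c + 1) σ
          exact (Finset.mem_insert.mp this).resolve_left (by omega)
        have h1 := hrank _ hdσ
        have h2 := rank_le_of_mem_stage hτ.1 hcτ
        rw [rank_succ, hd] at h1
        rw [rank_succ] at h2
        omega

noncomputable def radoComplex : SComplex ℕ where
  faces := ⋃ n, stage n
  nonempty_of_mem _ h := nonempty_of_mem_stage (Set.mem_iUnion.mp h).choose_spec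
  down_closed := DownClosed.iUnion downClosed_stage

theorem mem_radoComplex {σ : Finset ℕ} : σ ∈ radoComplex.faces ↔ ∃ n, σ ∈ stage n :=
  Set.mem_iUnion

theorem verts_radoComplex : radoComplex.verts = Set.univ := by
  refine Set.eq_univ_of_forall fun w => mem_radoComplex.mpr ?_
  rcases w with _ | c
  · exact ⟨0, rfl⟩
  · exact ⟨(code c).1 + 1, mem_stage_succ.mpr (Or.inr ⟨c, rfl, Or.inl rfl⟩)⟩

theorem insert_mem_radoComplex_iff {c : ℕ} {σ : Finset ℕ} (hσ : σ ∈ radoComplex.faces)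
    (hrank : ∀ w ∈ σ, rank w ≤ (code c).1) :
    insert (c + 1) σ ∈ radoComplex.faces ↔ ∀ τ ⊆ σ, τ.Nonempty → τ ∈ (code c).2 := by
  obtain ⟨m, hm⟩ := mem_radoComplex.mp hσ
  constructor
  · intro h
    obtain ⟨k, hk⟩ := mem_radoComplex.mp h
    exact (mem_facesWithin_of_insert_mem_stage (nonempty_of_mem_stage hm) hrank hk).2
  · intro h
    exact mem_radoComplex.mpr ⟨(code c).1 + 1, mem_stage_succ.mpr
      (Or.inr ⟨c, rfl, Or.inr ⟨σ, ⟨mem_stage_of_rank_le hm hrank, h⟩, rfl⟩⟩)⟩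

theorem ample_radoComplex (r : ℕ) : radoComplex.Ample r := by
  classical
  refine ⟨⟨{0}, mem_radoComplex.mpr ⟨0, rfl⟩⟩, fun U _ _ A hAU hA => ?_⟩
  obtain ⟨c, hc⟩ : ∃ c, code c = (U.sup rank, U.powerset.filter (· ∈ A)) :=
    ⟨_, Denumerable.ofNat_encode _⟩
  have hU : ∀ w ∈ U, rank w ≤ (code c).1 := fun w hw => hc ▸ Finset.le_sup hw
  have hcU : c + 1 ∉ U := fun h => by simpa [rank_succ] using hU _ h
  have rank_le_of_subset {σ : Finset ℕ} (hσU : (σ : Set ℕ) ⊆ U) :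
      ∀ w ∈ σ, rank w ≤ (code c).1 :=
    fun w hw => hU w (hσU hw)
  refine ⟨c + 1, verts_radoComplex ▸ Set.mem_univ _, hcU, Set.ext fun σ => ⟨?_, fun hσ => ?_⟩⟩
  · rintro ⟨⟨hσX, -, hins⟩, -, hσU⟩
    have := (insert_mem_radoComplex_iff hσX (rank_le_of_subset hσU)).mp hins σ subset_rfl
      (radoComplex.nonempty_of_mem hσX)
    rw [hc] at this
    exact (Finset.mem_filter.mp this).2
  · obtain ⟨hσX, hσU⟩ := hAU hσ
    refine ⟨⟨hσX, fun h => hcU (hσU h),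
      (insert_mem_radoComplex_iff hσX (rank_le_of_subset hσU)).mpr fun τ hτ hne => ?_⟩,
      hσX, hσU⟩
    rw [hc]
    exact Finset.mem_filter.mpr
      ⟨Finset.mem_powerset.mpr (hτ.trans (Finset.coe_subset.mp hσU)), hA hσ hτ hne⟩

end RadoComplex

open SComplex in
/-- there exists an `∞`-ample simplicial complex with countably infinite
vertex set. -/
theorem stmt10 :
    ∃ X : SComplex ℕ, X.verts.Countable ∧ X.verts.Infinite ∧
      ∀ r : ℕ, 1 ≤ r → X.Ample r :=
  ⟨RadoComplex.radoComplex, Set.to_countable _,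
    RadoComplex.verts_radoComplex ▸ Set.infinite_univ,
    fun r _ => RadoComplex.ample_radoComplex r⟩
end

section
/- Let X be an ∞-ample simplicial complex, let L be a finite simplicial complex and L' ⊆ L an induced subcomplex, let U' ⊆ V(X) be a finite subset, and let f' : L' → X_{U'} be an isomorphism of simplicial complexes. Then there exists a finite subset U ⊆ V(X) containing U' and an isomorphism f : L → X_U with f restricted to L' equal to f'. -/
/-!
Extend `f'` one vertex at a time. If `w` is a vertex of `L` outside the current domain `S`
and `U` is the current (finite) image, ampleness applied to `U` and the subcomplex
`f'(Lk_L(w) ∩ L_S)` of `X_U` yields `v ∉ U` with `Lk_X(v) ∩ X_U = f'(Lk_L(w) ∩ L_S)`.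
Since the simplexes of `L_{S ∪ {w}}` through `w` are the cones `τ ∪ {w}` with
`τ ∈ Lk_L(w) ∩ L_S`, and likewise for `v`, sending `w` to `v` extends the isomorphism.
As `L` is finite, finitely many steps exhaust it.
-/

lemma coe_image_subset_of_mapsTo {α β : Type*} [DecidableEq β] {f : α → β} {s : Set α}
    {t : Set β} (h : Set.MapsTo f s t) {σ : Finset α} (hσ : (σ : Set α) ⊆ s) :
    ((σ.image f : Finset β) : Set β) ⊆ t := by
  rw [Finset.coe_image]
  exact (h.mono_left hσ).image_subset

lemma injOn_finsetImage {α β : Type*} [DecidableEq β] {f : α → β} {s : Set α}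
    (hf : s.InjOn f) : {σ : Finset α | (σ : Set α) ⊆ s}.InjOn (Finset.image f) := by
  classical
  intro σ hσ τ hτ hστ
  have hunion : ((σ ∪ τ : Finset α) : Set α).InjOn f :=
    hf.mono (by simpa using Set.union_subset hσ hτ)
  exact Finset.image_injOn_powerset_of_injOn hunion
    (Finset.mem_coe.mpr (Finset.mem_powerset.mpr Finset.subset_union_left))
    (Finset.mem_coe.mpr (Finset.mem_powerset.mpr Finset.subset_union_right)) hστ

namespace SComplex

variable {V W : Type*}

lemma ext_faces {X Y : SComplex V} (h : X.faces = Y.faces) : X = Y := by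
  cases X
  cases Y
  congr

lemma coe_subset_verts_of_mem {X : SComplex V} {σ : Finset V} (hσ : σ ∈ X.faces) :
    (σ : Set V) ⊆ X.verts := fun v hv =>
  X.down_closed hσ (Finset.singleton_subset_iff.mpr hv) (Finset.singleton_nonempty v)

lemma verts_inducedSub (X : SComplex V) (U : Set V) : (X.inducedSub U).verts = X.verts ∩ U := by
  ext v
  simp [verts, inducedSub, induced]

lemma inducedSub_of_verts_subset {X : SComplex V} {U : Set V} (h : X.verts ⊆ U) :
    X.inducedSub U = X :=
  ext_faces <| Set.ext fun _ =>
    and_iff_left_of_imp fun hσ => (coe_subset_verts_of_mem hσ).trans h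

lemma DownClosed.inter {A B : Set (Finset V)} (hA : DownClosed A) (hB : DownClosed B) :
    DownClosed (A ∩ B) := fun _ hσ _ hτ hne => ⟨hA hσ.1 hτ hne, hB hσ.2 hτ hne⟩

lemma DownClosed.image [DecidableEq W] {A : Set (Finset V)} (hA : DownClosed A) (f : V → W) :
    DownClosed (Finset.image f '' A) := by
  rintro _ ⟨σ, hσ, rfl⟩ ρ hρ hne
  obtain ⟨τ, hτσ, rfl⟩ := Finset.subset_image_iff.mp hρ
  exact ⟨τ, hA hσ hτσ (Finset.image_nonempty.mp hne), rfl⟩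

variable [DecidableEq V]

lemma downClosed_link (X : SComplex V) (v : V) : DownClosed (X.link v) :=
  fun _ hσ _ hτ hne => ⟨X.down_closed hσ.1 hτ hne, fun hv => hσ.2.1 (hτ hv),
    X.down_closed hσ.2.2 (Finset.insert_subset_insert v hτ) (Finset.insert_nonempty v _)⟩

lemma mem_link_inter_induced_iff {X : SComplex V} {v : V} {U : Set V} {σ : Finset V}
    (hσU : (σ : Set V) ⊆ U) (hne : σ.Nonempty) (hv : v ∉ σ) :
    σ ∈ X.link v ∩ X.induced U ↔ insert v σ ∈ X.faces := by
  refine ⟨fun h => h.1.2.2, fun h => ?_⟩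
  have hσ : σ ∈ X.faces := X.down_closed h (Finset.subset_insert v σ) hne
  exact ⟨⟨hσ, hv, h⟩, hσ, hσU⟩

lemma isIso_inducedSub_iff {f : W → V} {L : SComplex W} {X : SComplex V}
    {S : Set W} {U : Set V} :
    IsIso f (L.inducedSub S) (X.inducedSub U) ↔
      Set.BijOn f (L.verts ∩ S) (X.verts ∩ U) ∧
        ∀ σ : Finset W, (σ : Set W) ⊆ L.verts ∩ S →
          (σ ∈ L.faces ↔ σ.image f ∈ X.faces) := by
  simp only [IsIso, verts_inducedSub]
  refine and_congr_right fun hbij => forall_congr' fun σ => imp_congr_right fun hσ => ?_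
  have himage := coe_image_subset_of_mapsTo hbij.mapsTo hσ
  simp only [inducedSub, induced, Set.mem_ofPred_eq, hσ.trans Set.inter_subset_right,
    himage.trans Set.inter_subset_right, and_true]

variable [DecidableEq W] {X : SComplex V} {L : SComplex W} {S : Set W} {U : Set V}
  {f : W → V} {w : W} {v : V}

lemma insert_mem_faces_iff_of_link_eq (hf : Set.BijOn f (L.verts ∩ S) U)
    (hwL : w ∈ L.verts) (hwS : w ∉ S) (hvX : v ∈ X.verts) (hvU : v ∉ U)
    (hlink : X.link v ∩ X.induced U = Finset.image f '' (L.link w ∩ L.induced S))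
    {τ : Finset W} (hτ : (τ : Set W) ⊆ L.verts ∩ S) :
    insert w τ ∈ L.faces ↔ insert v (τ.image f) ∈ X.faces := by
  rcases τ.eq_empty_or_nonempty with rfl | hne
  · simpa using ⟨fun _ => hvX, fun _ => hwL⟩
  have himage := coe_image_subset_of_mapsTo hf.mapsTo hτ
  have hsub : L.link w ∩ L.induced S ⊆ {σ : Finset W | (σ : Set W) ⊆ L.verts ∩ S} :=
    fun σ hσ => Set.subset_inter (coe_subset_verts_of_mem hσ.2.1) hσ.2.2
  rw [← mem_link_inter_induced_iff (hτ.trans Set.inter_subset_right) hne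
      (fun h => hwS (hτ h).2),
    ← mem_link_inter_induced_iff himage (hne.image f) (fun h => hvU (himage h)), hlink]
  exact ((injOn_finsetImage hf.injOn).mem_image_iff hsub hτ).symm

lemma isIso_update_of_link_eq (hf : IsIso f (L.inducedSub S) (X.inducedSub U))
    (hUX : U ⊆ X.verts) (hwL : w ∈ L.verts) (hwS : w ∉ S) (hvX : v ∈ X.verts) (hvU : v ∉ U)
    (hlink : X.link v ∩ X.induced U = Finset.image f '' (L.link w ∩ L.induced S)) :
    IsIso (Function.update f w v) (L.inducedSub (insert w S))
      (X.inducedSub (insert v U)) := by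
  rw [isIso_inducedSub_iff, Set.inter_eq_right.mpr hUX] at hf
  obtain ⟨hbij, hfaces⟩ := hf
  have hgf : Set.EqOn (Function.update f w v) f (L.verts ∩ S) := fun x hx =>
    Function.update_of_ne (ne_of_mem_of_not_mem hx.2 hwS) v f
  rw [isIso_inducedSub_iff, Set.inter_insert_of_mem hwL, Set.inter_insert_of_mem hvX,
    Set.inter_eq_right.mpr hUX]
  refine ⟨?_, fun σ hσ => ?_⟩
  · have h := (hbij.congr hgf.symm).insert (a := w) (by rwa [Function.update_self])
    rwa [Function.update_self] at h
  by_cases hwσ : w ∈ σ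
  · have hτ : ((σ.erase w : Finset W) : Set W) ⊆ L.verts ∩ S := fun x hx =>
      (hσ (Finset.mem_of_mem_erase hx)).resolve_left (Finset.ne_of_mem_erase hx)
    rw [← Finset.insert_erase hwσ, Finset.image_insert, Function.update_self,
      Finset.image_congr (hgf.mono hτ)]
    exact insert_mem_faces_iff_of_link_eq hbij hwL hwS hvX hvU hlink hτ
  · have hσ' : (σ : Set W) ⊆ L.verts ∩ S := fun x hx =>
      (hσ hx).resolve_left fun h => hwσ (h ▸ hx)
    rw [Finset.image_congr (hgf.mono hσ')]
    exact hfaces σ hσ'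

theorem exists_isIso_inducedSub_insert {r : ℕ} (hX : X.Ample r) {U : Finset V}
    (hUr : U.card ≤ r) (hUX : (U : Set V) ⊆ X.verts)
    (hf : IsIso f (L.inducedSub S) (X.inducedSub U)) (hwL : w ∈ L.verts) (hwS : w ∉ S) :
    ∃ v ∈ X.verts, v ∉ U ∧
      IsIso (Function.update f w v) (L.inducedSub (insert w S))
        (X.inducedSub (insert v U)) := by
  obtain ⟨hbij, hfaces⟩ := isIso_inducedSub_iff.mp hf
  rw [Set.inter_eq_right.mpr hUX] at hbij
  have hA : Finset.image f '' (L.link w ∩ L.induced S) ⊆ X.induced U := by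
    rintro _ ⟨σ, hσ, rfl⟩
    have hσS : (σ : Set W) ⊆ L.verts ∩ S :=
      Set.subset_inter (coe_subset_verts_of_mem hσ.2.1) hσ.2.2
    exact ⟨(hfaces σ hσS).mp hσ.2.1, coe_image_subset_of_mapsTo hbij.mapsTo hσS⟩
  obtain ⟨v, hvX, hvU, hlink⟩ := hX.2 U hUX hUr _ hA
    (((L.downClosed_link w).inter (L.inducedSub S).down_closed).image f)
  exact ⟨v, hvX, hvU, isIso_update_of_link_eq hf hUX hwL hwS hvX hvU hlink⟩

theorem exists_isIso_inducedSub_union (hX : ∀ r, 1 ≤ r → X.Ample r) {U' : Set V}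
    (hU'fin : U'.Finite) (hU'X : U' ⊆ X.verts) {f' : W → V}
    (hf' : IsIso f' (L.inducedSub S) (X.inducedSub U')) (D : Finset W)
    (hD : (D : Set W) ⊆ L.verts) :
    ∃ U : Set V, U.Finite ∧ U' ⊆ U ∧ U ⊆ X.verts ∧
      ∃ f : W → V, IsIso f (L.inducedSub (S ∪ D)) (X.inducedSub U) ∧
        Set.EqOn f f' (L.verts ∩ S) := by
  induction D using Finset.induction_on with
  | empty => exact ⟨U', hU'fin, subset_rfl, hU'X, f', by simpa using hf', fun _ _ => rfl⟩
  | insert w D _ ih =>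
    rw [Finset.coe_insert, Set.insert_subset_iff] at hD
    obtain ⟨U, hUfin, hU'U, hUX, f, hf, hff'⟩ := ih hD.2
    rw [Finset.coe_insert, Set.union_insert]
    by_cases hwS : w ∈ S ∪ D
    · rw [Set.insert_eq_of_mem hwS]
      exact ⟨U, hUfin, hU'U, hUX, f, hf, hff'⟩
    rw [← hUfin.coe_toFinset] at hf hUX
    obtain ⟨v, hvX, -, hg⟩ :=
      exists_isIso_inducedSub_insert (hX (_ + 1) le_add_self) (Nat.le_succ _) hUX hf hD.1 hwS
    refine ⟨insert v U, hUfin.insert v, hU'U.trans (Set.subset_insert v U), ?_,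
      Function.update f w v, ?_, ?_⟩
    · exact Set.insert_subset hvX (hUfin.coe_toFinset ▸ hUX)
    · rwa [hUfin.coe_toFinset] at hg
    · intro x hx
      rw [Function.update_of_ne (ne_of_mem_of_not_mem (Or.inl hx.2) hwS)]
      exact hff' hx

end SComplex

open SComplex in
theorem stmt12_general {V : Type*} {VL : Type*} [DecidableEq V] [DecidableEq VL]
    (X : SComplex V) (hX : ∀ r : ℕ, 1 ≤ r → X.Ample r)
    (L : SComplex VL) (hL : L.verts.Finite)
    (S : Set VL)
    (U' : Set V) (hU'fin : U'.Finite) (hU'v : U' ⊆ X.verts)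
    (f' : VL → V) (hf' : IsIso f' (L.inducedSub S) (X.inducedSub U')) :
    ∃ U : Set V, U.Finite ∧ U' ⊆ U ∧ U ⊆ X.verts ∧
      ∃ f : VL → V, IsIso f L (X.inducedSub U) ∧
        Set.EqOn f f' (L.inducedSub S).verts := by
  obtain ⟨U, hUfin, hU'U, hUX, f, hf, hff'⟩ :=
    exists_isIso_inducedSub_union hX hU'fin hU'v hf' hL.toFinset (by simp)
  rw [hL.coe_toFinset, inducedSub_of_verts_subset Set.subset_union_right] at hf
  exact ⟨U, hUfin, hU'U, hUX, f, hf, by rwa [verts_inducedSub]⟩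

open SComplex in
/-- any isomorphism of an induced subcomplex `L'` of a finite complex `L`
onto an induced subcomplex `X_{U'}` of an `∞`-ample complex `X` extends to an
isomorphism of `L` onto an induced subcomplex `X_U` with `U ⊇ U'`. -/
theorem stmt12 {V : Type*} {VL : Type*} [DecidableEq V] [DecidableEq VL]
    (X : SComplex V) (hX : ∀ r : ℕ, 1 ≤ r → X.Ample r)
    (L : SComplex VL) (hL : L.verts.Finite)
    (S : Set VL) (hS : S ⊆ L.verts)
    (U' : Set V) (hU'fin : U'.Finite) (hU'v : U' ⊆ X.verts)
    (f' : VL → V) (hf' : IsIso f' (L.inducedSub S) (X.inducedSub U')) :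
    ∃ U : Set V, U.Finite ∧ U' ⊆ U ∧ U ⊆ X.verts ∧
      ∃ f : VL → V, IsIso f L (X.inducedSub U) ∧
        Set.EqOn f f' (L.inducedSub S).verts :=
  stmt12_general X hX L hL S U' hU'fin hU'v f' hf'
end
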